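/- arXiv:2104.05922 — 9 statements merged into one kernel-verified Lean document; each statement's English description precedes it below -/
import Mathlib

section
/- Let L be the infinite-dimensional cyclic Leibniz algebra over a field F (basis {a_n | n ≥ 1}, [a_1,a_n] = a_{n+1}, [a_m,a_k] = 0 for m > 1). If f is an endomorphism of L with f(a_1) = Σ_n γ_n a_n (finitely many γ_n nonzero), then for every s ≥ 1, f(a_s) = Σ_k γ_1^{s-1} γ_k a_{k+s-1}. -/
/-!
In the basis, the bracket is `[x, y] = x₁ • σ y`, where `x₁` is the `a₁`-coordinate of `x` and `σ`
is the shift `a_n ↦ a_{n+1}`. Hence `f a_{s+1} = [f a₁, f a_s] = γ₁ • σ (f a_s)`, so that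
`f a_s = γ₁ ^ (s - 1) • σ ^ (s - 1) (f a₁)`, and expanding `f a₁ = ∑ γ_k a_k` gives the formula.
-/

open Module

namespace PNat

lemma add_sub_one_add_one (k s : ℕ+) : k + s - 1 + 1 = k + (s + 1) - 1 := by
  have hks : 1 < k + s := (one_le (a := k)).trans_lt (k.lt_add_right s)
  rw [← add_assoc, PNat.add_sub, PNat.sub_add_of_lt hks]

end PNat

section CyclicLeibniz

variable {F L : Type*} [Field F] [AddCommGroup L] [Module F L]

noncomputable def Module.Basis.shift (B : Basis ℕ+ F L) : L →ₗ[F] L :=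
  B.constr F fun n => B (n + 1)

lemma Module.Basis.shift_apply_basis (B : Basis ℕ+ F L) (n : ℕ+) : B.shift (B n) = B (n + 1) :=
  B.constr_basis F _ n

lemma Module.Basis.shift_pow_apply_basis (B : Basis ℕ+ F L) (k s : ℕ+) :
    (B.shift ^ ((s : ℕ) - 1)) (B k) = B (k + s - 1) := by
  induction s using PNat.recOn with
  | one => simp [PNat.add_sub]
  | succ s ih =>
    obtain ⟨m, hm⟩ : ∃ m, (s : ℕ) = m + 1 := Nat.exists_eq_add_one.mpr s.pos
    rw [hm, Nat.add_sub_cancel] at ih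
    rw [PNat.add_coe, PNat.one_coe, Nat.add_sub_cancel, hm, pow_succ', Module.End.mul_apply, ih,
      B.shift_apply_basis, PNat.add_sub_one_add_one]

variable {br : L →ₗ[F] L →ₗ[F] L} {B : Basis ℕ+ F L}

lemma bracket_eq_coord_one_smulRight_shift
    (hbr1 : ∀ n : ℕ+, br (B 1) (B n) = B (n + 1))
    (hbr2 : ∀ m k : ℕ+, 1 < m → br (B m) (B k) = 0) :
    br = (B.coord 1).smulRight B.shift := by
  refine B.ext fun m => B.ext fun n => ?_
  rcases (one_le (a := m)).eq_or_lt with rfl | hm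
  · simp [hbr1, B.shift_apply_basis]
  · simp [hbr2 m n hm, Finsupp.single_eq_of_ne hm.ne]

lemma endomorphism_apply_basis_eq_smul_shift_pow
    (hbr1 : ∀ n : ℕ+, br (B 1) (B n) = B (n + 1))
    (hbr2 : ∀ m k : ℕ+, 1 < m → br (B m) (B k) = 0)
    (f : L →ₗ[F] L) (hf : ∀ x y : L, f (br x y) = br (f x) (f y)) (s : ℕ+) :
    f (B s) = B.repr (f (B 1)) 1 ^ ((s : ℕ) - 1) • (B.shift ^ ((s : ℕ) - 1)) (f (B 1)) := by
  induction s using PNat.recOn with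
  | one => simp
  | succ s ih =>
    obtain ⟨m, hm⟩ : ∃ m, (s : ℕ) = m + 1 := Nat.exists_eq_add_one.mpr s.pos
    rw [← hbr1, hf, bracket_eq_coord_one_smulRight_shift hbr1 hbr2, LinearMap.smulRight_apply,
      LinearMap.smul_apply, ih, Basis.coord_apply, map_smul, smul_smul, PNat.add_coe,
      PNat.one_coe, Nat.add_sub_cancel, hm, Nat.add_sub_cancel, pow_succ', pow_succ',
      Module.End.mul_apply]

end CyclicLeibniz

theorem stmt9_general
    (F : Type*) [Field F] (L : Type*) [AddCommGroup L] [Module F L]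
    (br : L →ₗ[F] L →ₗ[F] L) (B : Module.Basis ℕ+ F L)
    (hbr1 : ∀ n : ℕ+, br (B 1) (B n) = B (n + 1))
    (hbr2 : ∀ m k : ℕ+, 1 < m → br (B m) (B k) = 0)
    (f : L →ₗ[F] L) (hf : ∀ x y : L, f (br x y) = br (f x) (f y)) :
    ∀ s : ℕ+, f (B s) = (B.repr (f (B 1))).sum fun k c =>
      ((B.repr (f (B 1)) 1) ^ ((s : ℕ) - 1) * c) • B (k + s - 1) := by
  intro s
  set γ := B.repr (f (B 1)) with hγ
  rw [endomorphism_apply_basis_eq_smul_shift_pow hbr1 hbr2 f hf s, ← hγ,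
    ← B.linearCombination_repr (f (B 1)), ← hγ, Finsupp.linearCombination_apply]
  simp only [map_finsuppSum, map_smul, B.shift_pow_apply_basis, Finsupp.smul_sum, smul_smul]

/-- For the infinite dimensional cyclic Leibniz algebra with basis `{a_n | n ≥ 1}`:
if `f` is an endomorphism with `f(a₁) = Σ_n γ_n a_n`, then
`f(a_s) = Σ_k γ₁^{s-1} γ_k a_{k+s-1}` for all `s ≥ 1`. -/
theorem stmt9
    (F : Type*) [Field F] (L : Type*) [AddCommGroup L] [Module F L]
    (br : L →ₗ[F] L →ₗ[F] L) (B : Module.Basis ℕ+ F L)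
    (hleib : ∀ a b c : L, br a (br b c) = br (br a b) c + br b (br a c))
    (hbr1 : ∀ n : ℕ+, br (B 1) (B n) = B (n + 1))
    (hbr2 : ∀ m k : ℕ+, 1 < m → br (B m) (B k) = 0)
    (f : L →ₗ[F] L) (hf : ∀ x y : L, f (br x y) = br (f x) (f y)) :
    ∀ s : ℕ+, f (B s) = (B.repr (f (B 1))).sum fun k c =>
      ((B.repr (f (B 1)) 1) ^ ((s : ℕ) - 1) * c) • B (k + s - 1) :=
  stmt9_general F L br B hbr1 hbr2 f hf
end

section
/- Let L be the infinite-dimensional cyclic Leibniz algebra over a field F (basis {a_n | n ≥ 1}, [a_1,a_n] = a_{n+1}, [a_m,a_k] = 0 for m > 1). Conversely to the determination of endomorphisms: for any finitely supported sequence (γ_n)_{n≥1} in F, the linear map f defined by f(a_s) = Σ_k γ_1^{s-1} γ_k a_{k+s-1} for all s ≥ 1 is an endomorphism of L. -/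
/-!
Write `v s` for the prescribed image of `a_s`. Then `v 1 = Σ_k γ_k a_k` and `v (s+1) = γ₁ [a_1, v s]`.
Every `a_m` with `m > 1` is a left annihilator, so `[v 1, -] = γ₁ [a_1, -]`, while `v (s+1)`, being a
bracket with `a_1`, is a combination of such `a_m` and brackets to zero with everything. These two facts
are exactly the endomorphism identity on pairs of basis vectors.
-/

namespace CyclicLeibniz

open Module

variable {R L : Type*} [CommSemiring R] [AddCommMonoid L] [Module R L]
  {br : L →ₗ[R] L →ₗ[R] L} {B : Basis ℕ+ R L}

noncomputable def seriesImage (B : Basis ℕ+ R L) (γ : ℕ+ →₀ R) (s : ℕ+) : L :=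
  γ.sum fun k c => (γ 1 ^ ((s : ℕ) - 1) * c) • B (k + s - 1)

lemma br_basis_eq_zero (hbr2 : ∀ m k : ℕ+, 1 < m → br (B m) (B k) = 0) {m : ℕ+} (hm : 1 < m) :
    br (B m) = 0 :=
  B.ext fun k => hbr2 m k hm

lemma br_linearCombination_eq_zero (hbr2 : ∀ m k : ℕ+, 1 < m → br (B m) (B k) = 0)
    (c : ℕ+ →₀ R) (hc : c 1 = 0) : br (Finsupp.linearCombination R B c) = 0 := by
  rw [Finsupp.linearCombination_apply, Finsupp.sum, map_sum]
  refine Finset.sum_eq_zero fun k _ => ?_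
  rcases (one_le (a := k)).eq_or_lt with rfl | hk
  · rw [hc, zero_smul, map_zero]
  · rw [map_smul, br_basis_eq_zero hbr2 hk, smul_zero]

lemma br_comp_br_one_eq_zero (hbr1 : ∀ n : ℕ+, br (B 1) (B n) = B (n + 1))
    (hbr2 : ∀ m k : ℕ+, 1 < m → br (B m) (B k) = 0) : br ∘ₗ br (B 1) = 0 :=
  B.ext fun n => by
    rw [LinearMap.comp_apply, hbr1, br_basis_eq_zero hbr2 (PNat.lt_add_left 1 n)]; rfl

lemma seriesImage_one (γ : ℕ+ →₀ R) :
    seriesImage B γ 1 = Finsupp.linearCombination R B γ := by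
  simp only [seriesImage, PNat.one_coe, Nat.sub_self, pow_zero, one_mul, PNat.add_sub,
    Finsupp.linearCombination_apply]

lemma seriesImage_succ (hbr1 : ∀ n : ℕ+, br (B 1) (B n) = B (n + 1)) (γ : ℕ+ →₀ R) (s : ℕ+) :
    seriesImage B γ (s + 1) = γ 1 • br (B 1) (seriesImage B γ s) := by
  simp only [seriesImage, Finsupp.sum, map_sum, map_smul, hbr1, Finset.smul_sum, smul_smul]
  refine Finset.sum_congr rfl fun k _ => ?_
  have hexp : ((s + 1 : ℕ+) : ℕ) - 1 = (s : ℕ) - 1 + 1 := by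
    simp only [PNat.add_coe, PNat.one_coe]; have := s.pos; omega
  have hidx : k + (s + 1) - 1 = k + s - 1 + 1 := by
    rw [← add_assoc, PNat.add_sub, PNat.sub_add_of_lt (PNat.lt_add_left s k).one_lt]
  rw [hexp, hidx, pow_succ', mul_assoc]

lemma br_seriesImage_one (hbr2 : ∀ m k : ℕ+, 1 < m → br (B m) (B k) = 0) (γ : ℕ+ →₀ R) :
    br (seriesImage B γ 1) = γ 1 • br (B 1) := by
  conv_lhs => rw [seriesImage_one, ← Finsupp.single_add_erase 1 γ, map_add,
    Finsupp.linearCombination_single, map_add, map_smul,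
    br_linearCombination_eq_zero hbr2 _ Finsupp.erase_same, add_zero]

lemma br_seriesImage_succ (hbr1 : ∀ n : ℕ+, br (B 1) (B n) = B (n + 1))
    (hbr2 : ∀ m k : ℕ+, 1 < m → br (B m) (B k) = 0) (γ : ℕ+ →₀ R) (s : ℕ+) :
    br (seriesImage B γ (s + 1)) = 0 := by
  rw [seriesImage_succ hbr1, map_smul, ← LinearMap.comp_apply,
    br_comp_br_one_eq_zero hbr1 hbr2, LinearMap.zero_apply, smul_zero]

end CyclicLeibniz

open CyclicLeibniz in
theorem stmt10_general
    (F : Type*) [Field F] (L : Type*) [AddCommGroup L] [Module F L]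
    (br : L →ₗ[F] L →ₗ[F] L) (B : Module.Basis ℕ+ F L)
    (hbr1 : ∀ n : ℕ+, br (B 1) (B n) = B (n + 1))
    (hbr2 : ∀ m k : ℕ+, 1 < m → br (B m) (B k) = 0)
    (γ : ℕ+ →₀ F) (f : L →ₗ[F] L)
    (hfdef : ∀ s : ℕ+, f (B s) = γ.sum fun k c =>
      ((γ 1) ^ ((s : ℕ) - 1) * c) • B (k + s - 1)) :
    ∀ x y : L, f (br x y) = br (f x) (f y) := by
  have hf : ∀ s, f (B s) = seriesImage B γ s := hfdef
  suffices br.compr₂ f = (br.comp f).compl₂ f from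
    fun x y => LinearMap.congr_fun (LinearMap.congr_fun this x) y
  refine LinearMap.ext_basis B B fun m k => ?_
  simp only [LinearMap.compr₂_apply, LinearMap.compl₂_apply, LinearMap.comp_apply]
  induction m using PNat.recOn with
  | one => rw [hbr1, hf, hf, seriesImage_succ hbr1, hf, br_seriesImage_one hbr2]; rfl
  | succ m _ =>
    rw [hbr2 _ k (PNat.lt_add_left 1 m), map_zero, hf, br_seriesImage_succ hbr1 hbr2]; rfl

/-- For the infinite dimensional cyclic Leibniz algebra with basis `{a_n | n ≥ 1}`:
for any finitely supported sequence `(γ_n)` in `F`, the linear map defined by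
`f(a_s) = Σ_k γ₁^{s-1} γ_k a_{k+s-1}` is an endomorphism. -/
theorem stmt10
    (F : Type*) [Field F] (L : Type*) [AddCommGroup L] [Module F L]
    (br : L →ₗ[F] L →ₗ[F] L) (B : Module.Basis ℕ+ F L)
    (hleib : ∀ a b c : L, br a (br b c) = br (br a b) c + br b (br a c))
    (hbr1 : ∀ n : ℕ+, br (B 1) (B n) = B (n + 1))
    (hbr2 : ∀ m k : ℕ+, 1 < m → br (B m) (B k) = 0)
    (γ : ℕ+ →₀ F) (f : L →ₗ[F] L)
    (hfdef : ∀ s : ℕ+, f (B s) = γ.sum fun k c =>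
      ((γ 1) ^ ((s : ℕ) - 1) * c) • B (k + s - 1)) :
    ∀ x y : L, f (br x y) = br (f x) (f y) :=
  stmt10_general F L br B hbr1 hbr2 γ f hfdef
end

section
/- Let L be the infinite-dimensional cyclic Leibniz algebra over a field F (basis {a_n | n ≥ 1}, [a_1,a_n] = a_{n+1}, [a_m,a_k] = 0 for m > 1). If f is an endomorphism of L with f(a_1) ∈ [L,L] (i.e. the coefficient of a_1 in f(a_1) is zero), then f(a_j) = 0 for all j > 1, and f ∘ f = 0. -/
/-!
The derived subalgebra `span {a_n | n ≥ 2}` annihilates everything from the left, so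
`[f a₁, -] = 0` once `f a₁` lies in it. Since every `a_j` with `j > 1` is `[a₁, a_{j-1}]`,
`f a_j = [f a₁, f a_{j-1}] = 0`. Thus `f` kills the derived subalgebra, which contains the
whole image of `f`, so `f ∘ f = 0`.
-/

section

variable {F L : Type*} [Field F] [AddCommGroup L] [Module F L] (B : Module.Basis ℕ+ F L)

theorem apply_eq_zero_of_mem_span_basis_gt_one {M : Type*} [AddCommGroup M] [Module F M]
    {g : L →ₗ[F] M} (hg : ∀ n : ℕ+, 1 < n → g (B n) = 0) {x : L}
    (hx : x ∈ Submodule.span F {x : L | ∃ n : ℕ+, 1 < n ∧ x = B n}) : g x = 0 :=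
  (Submodule.span_le (p := LinearMap.ker g)).2 (by rintro _ ⟨n, hn, rfl⟩; exact hg n hn) hx

theorem bracket_eq_zero_of_mem_span_basis_gt_one (br : L →ₗ[F] L →ₗ[F] L)
    (hbr2 : ∀ m k : ℕ+, 1 < m → br (B m) (B k) = 0) {x : L}
    (hx : x ∈ Submodule.span F {x : L | ∃ n : ℕ+, 1 < n ∧ x = B n}) : br x = 0 :=
  apply_eq_zero_of_mem_span_basis_gt_one B (fun m hm => B.ext fun k => hbr2 m k hm) hx

theorem apply_basis_eq_zero_of_bracket_apply_one_eq_zero (br : L →ₗ[F] L →ₗ[F] L)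
    (hbr1 : ∀ n : ℕ+, br (B 1) (B n) = B (n + 1))
    (f : L →ₗ[F] L) (hf : ∀ x y : L, f (br x y) = br (f x) (f y))
    (hf1 : br (f (B 1)) = 0) (j : ℕ+) (hj : 1 < j) : f (B j) = 0 := by
  obtain ⟨k, rfl⟩ := PNat.exists_eq_succ_of_ne_one hj.ne'
  rw [← hbr1, hf, hf1, LinearMap.zero_apply]

end

theorem stmt11_general
    (F : Type*) [Field F] (L : Type*) [AddCommGroup L] [Module F L]
    (br : L →ₗ[F] L →ₗ[F] L) (B : Module.Basis ℕ+ F L)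
    (hbr1 : ∀ n : ℕ+, br (B 1) (B n) = B (n + 1))
    (hbr2 : ∀ m k : ℕ+, 1 < m → br (B m) (B k) = 0)
    (f : L →ₗ[F] L) (hf : ∀ x y : L, f (br x y) = br (f x) (f y))
    (h1 : f (B 1) ∈ Submodule.span F {x : L | ∃ n : ℕ+, 1 < n ∧ x = B n}) :
    (∀ j : ℕ+, 1 < j → f (B j) = 0) ∧ f ∘ₗ f = 0 := by
  have hfj : ∀ j : ℕ+, 1 < j → f (B j) = 0 :=
    apply_basis_eq_zero_of_bracket_apply_one_eq_zero B br hbr1 f hf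
      (bracket_eq_zero_of_mem_span_basis_gt_one B br hbr2 h1)
  refine ⟨hfj, B.ext fun n => ?_⟩
  rcases (one_le : 1 ≤ n).eq_or_lt with rfl | hn
  · exact apply_eq_zero_of_mem_span_basis_gt_one B hfj h1
  · rw [LinearMap.comp_apply, hfj n hn, map_zero, LinearMap.zero_apply]

/-- For the infinite dimensional cyclic Leibniz algebra with basis `{a_n | n ≥ 1}`:
if `f` is an endomorphism with `f(a₁) ∈ [L,L] = span {a_n | n ≥ 2}`, then
`f(a_j) = 0` for all `j > 1` and `f ∘ f = 0`. -/
theorem stmt11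
    (F : Type*) [Field F] (L : Type*) [AddCommGroup L] [Module F L]
    (br : L →ₗ[F] L →ₗ[F] L) (B : Module.Basis ℕ+ F L)
    (hleib : ∀ a b c : L, br a (br b c) = br (br a b) c + br b (br a c))
    (hbr1 : ∀ n : ℕ+, br (B 1) (B n) = B (n + 1))
    (hbr2 : ∀ m k : ℕ+, 1 < m → br (B m) (B k) = 0)
    (f : L →ₗ[F] L) (hf : ∀ x y : L, f (br x y) = br (f x) (f y))
    (h1 : f (B 1) ∈ Submodule.span F {x : L | ∃ n : ℕ+, 1 < n ∧ x = B n}) :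
    (∀ j : ℕ+, 1 < j → f (B j) = 0) ∧ f ∘ₗ f = 0 :=
  stmt11_general F L br B hbr1 hbr2 f hf h1
end

section
/- Let L be the infinite-dimensional cyclic Leibniz algebra over a field F (basis {a_n | n ≥ 1}, [a_1,a_n] = a_{n+1}, [a_m,a_k] = 0 for m > 1). An endomorphism f of L satisfies f ∘ f = 0 if and only if f(x) ∈ [L,L] for every x ∈ L. -/
/-!
Write `c` for the first coordinate functional of the basis. Since only `a₁` acts, every bracket
is `[x, y] = c(x) • [a₁, y]`, and `[a₁, -]` shifts the basis, so `[L, L] = ker c`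
and `c` kills all brackets. For an endomorphism `f` this forces `c ∘ f = d • c` with
`d = c(f a₁)`. If `f ∘ f = 0` then `d² = 0`, so `c ∘ f = 0`, i.e. `f(L) ⊆ [L, L]`.
Conversely, if `c ∘ f = 0` then `f` kills every bracket, and `f(L) ⊆ [L, L]` consists of
brackets.
-/

namespace CyclicLeibniz

open Module

variable {R L : Type*} [CommRing R] [AddCommGroup L] [Module R L]
  (br : L →ₗ[R] L →ₗ[R] L) (B : Basis ℕ+ R L)

theorem span_basis_one_lt_eq_ker_coord :
    Submodule.span R {z : L | ∃ n : ℕ+, 1 < n ∧ z = B n} = LinearMap.ker (B.coord 1) := by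
  ext y
  have hset : {z : L | ∃ n : ℕ+, 1 < n ∧ z = B n} = B '' {n | 1 < n} := by
    ext z
    simp only [Set.mem_ofPred_eq, Set.mem_image, eq_comm]
  rw [hset, B.mem_span_image, LinearMap.mem_ker, B.coord_apply]
  simp only [Set.subset_def, Finset.mem_coe, Finsupp.mem_support_iff, Set.mem_ofPred_eq,
    one_lt_iff_ne_one]
  exact ⟨fun h => by_contra fun h1 => h 1 h1 rfl, fun h n hn hn1 => hn (hn1 ▸ h)⟩

theorem bracket_eq_coord_smul (hbr2 : ∀ m k : ℕ+, 1 < m → br (B m) (B k) = 0) (x y : L) :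
    br x y = B.coord 1 x • br (B 1) y := by
  suffices h : br = (B.coord 1).smulRight (br (B 1)) from LinearMap.congr_fun₂ h x y
  refine B.ext fun i => ?_
  rcases eq_or_ne i 1 with rfl | hi
  · simp
  · have hzero : br (B i) = 0 :=
      B.ext fun k => hbr2 i k (one_lt_iff_ne_one.mpr hi)
    simp [hzero, hi]

theorem ker_coord_le_range_bracket (hbr1 : ∀ n : ℕ+, br (B 1) (B n) = B (n + 1)) :
    LinearMap.ker (B.coord 1) ≤ LinearMap.range (br (B 1)) := by
  rw [← span_basis_one_lt_eq_ker_coord, Submodule.span_le]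
  rintro _ ⟨n, hn, rfl⟩
  obtain ⟨k, rfl⟩ := PNat.exists_eq_succ_of_ne_one hn.ne'
  exact ⟨B k, hbr1 k⟩

theorem coord_bracket (hbr1 : ∀ n : ℕ+, br (B 1) (B n) = B (n + 1))
    (hbr2 : ∀ m k : ℕ+, 1 < m → br (B m) (B k) = 0) (x y : L) :
    B.coord 1 (br x y) = 0 := by
  have hshift : B.coord 1 ∘ₗ br (B 1) = 0 := B.ext fun n => by
    simp [hbr1, (PNat.lt_add_left 1 n).ne]
  rw [bracket_eq_coord_smul br B hbr2, map_smul, ← LinearMap.comp_apply, hshift,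
    LinearMap.zero_apply, smul_zero]

variable {br B}

theorem coord_comp_eq_smul_coord (hbr1 : ∀ n : ℕ+, br (B 1) (B n) = B (n + 1))
    (hbr2 : ∀ m k : ℕ+, 1 < m → br (B m) (B k) = 0) {f : L →ₗ[R] L}
    (hf : ∀ x y : L, f (br x y) = br (f x) (f y)) :
    B.coord 1 ∘ₗ f = B.coord 1 (f (B 1)) • B.coord 1 := by
  refine B.ext fun i => ?_
  rcases eq_or_ne i 1 with rfl | hi
  · simp
  · obtain ⟨k, rfl⟩ := PNat.exists_eq_succ_of_ne_one hi
    simp [← hbr1, hf, coord_bracket br B hbr1 hbr2]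

end CyclicLeibniz

theorem stmt12_general
    (F : Type*) [Field F] (L : Type*) [AddCommGroup L] [Module F L]
    (br : L →ₗ[F] L →ₗ[F] L) (B : Module.Basis ℕ+ F L)
    (hbr1 : ∀ n : ℕ+, br (B 1) (B n) = B (n + 1))
    (hbr2 : ∀ m k : ℕ+, 1 < m → br (B m) (B k) = 0)
    (f : L →ₗ[F] L) (hf : ∀ x y : L, f (br x y) = br (f x) (f y)) :
    f ∘ₗ f = 0 ↔
      ∀ x : L, f x ∈ Submodule.span F {z : L | ∃ n : ℕ+, 1 < n ∧ z = B n} := by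
  rw [CyclicLeibniz.span_basis_one_lt_eq_ker_coord]
  have hcf := CyclicLeibniz.coord_comp_eq_smul_coord hbr1 hbr2 hf
  constructor
  · intro hff x
    have hd : B.coord 1 (f (B 1)) = 0 := by
      have h := LinearMap.congr_fun hcf (f (B 1))
      rw [LinearMap.comp_apply, ← LinearMap.comp_apply f f, hff] at h
      simpa using h.symm
    rw [LinearMap.mem_ker, ← LinearMap.comp_apply, hcf, hd, zero_smul, LinearMap.zero_apply]
  · intro hker
    ext x
    obtain ⟨y, hy⟩ := CyclicLeibniz.ker_coord_le_range_bracket br B hbr1 (hker x)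
    rw [LinearMap.comp_apply, ← hy, hf, CyclicLeibniz.bracket_eq_coord_smul br B hbr2,
      hker (B 1), zero_smul, LinearMap.zero_apply]

/-- For the infinite dimensional cyclic Leibniz algebra with basis `{a_n | n ≥ 1}`:
an endomorphism `f` satisfies `f ∘ f = 0` if and only if `f(x) ∈ [L,L]`
(`= span {a_n | n ≥ 2}`) for every `x`. -/
theorem stmt12
    (F : Type*) [Field F] (L : Type*) [AddCommGroup L] [Module F L]
    (br : L →ₗ[F] L →ₗ[F] L) (B : Module.Basis ℕ+ F L)
    (hleib : ∀ a b c : L, br a (br b c) = br (br a b) c + br b (br a c))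
    (hbr1 : ∀ n : ℕ+, br (B 1) (B n) = B (n + 1))
    (hbr2 : ∀ m k : ℕ+, 1 < m → br (B m) (B k) = 0)
    (f : L →ₗ[F] L) (hf : ∀ x y : L, f (br x y) = br (f x) (f y)) :
    f ∘ₗ f = 0 ↔
      ∀ x : L, f x ∈ Submodule.span F {z : L | ∃ n : ℕ+, 1 < n ∧ z = B n} :=
  stmt12_general F L br B hbr1 hbr2 f hf
end

section
/- Let L be the infinite-dimensional cyclic Leibniz algebra over a field F (basis {a_n | n ≥ 1}, [a_1,a_n] = a_{n+1}, [a_m,a_k] = 0 for m > 1). If f and g are endomorphisms of L with f(L) ⊆ [L,L] and g(L) ⊆ [L,L], then f ∘ g = 0; moreover, for any endomorphism h of L, both h ∘ f and f ∘ h map L into [L,L]. Thus S = {f endomorphism | f(L) ⊆ [L,L]} is a two-sided ideal of the endomorphism monoid of L with zero multiplication. -/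
/-!
Write `S = span {a_n | n ≥ 2}`. Every bracket lies in `S`, and `S` brackets to zero from the
left, since `[a_m, -] = 0` for `m > 1`. As `a_{n+1} = [a_1, a_n]`, an endomorphism `h` sends
`a_{n+1}` to the bracket `[h a_1, h a_n] ∈ S`, so `h(S) ⊆ S`; if moreover `h(L) ⊆ S`, this bracket
has its left entry in `S` and vanishes, so `h` kills `S`.
-/

open Submodule

theorem Submodule.apply_mem_of_mem_span_of_mem_span {R M N P : Type*} [CommSemiring R]
    [AddCommMonoid M] [AddCommMonoid N] [AddCommMonoid P] [Module R M] [Module R N] [Module R P]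
    {f : M →ₗ[R] N →ₗ[R] P} {s : Set M} {t : Set N} {r : Submodule R P}
    (h : ∀ m ∈ s, ∀ n ∈ t, f m n ∈ r) {m : M} {n : N} (hm : m ∈ span R s)
    (hn : n ∈ span R t) : f m n ∈ r := by
  have hspan : map₂ f (span R s) (span R t) ≤ r := by
    rw [map₂_span_span, span_le]
    rintro _ ⟨a, ha, b, hb, rfl⟩
    exact h a ha b hb
  exact map₂_le.1 hspan m hm n hn

namespace CyclicLeibniz

variable {R L : Type*} [CommSemiring R] [AddCommMonoid L] [Module R L]
  {br : L →ₗ[R] L →ₗ[R] L} {B : Module.Basis ℕ+ R L}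

variable (B) in
def derived : Submodule R L :=
  span R {z : L | ∃ n : ℕ+, 1 < n ∧ z = B n}

theorem basis_mem_derived {n : ℕ+} (hn : 1 < n) : B n ∈ derived B :=
  subset_span ⟨n, hn, rfl⟩

theorem apply_mem_derived (hbr1 : ∀ n : ℕ+, br (B 1) (B n) = B (n + 1))
    (hbr2 : ∀ m k : ℕ+, 1 < m → br (B m) (B k) = 0) (x y : L) : br x y ∈ derived B := by
  refine apply_mem_of_mem_span_of_mem_span ?_ (B.mem_span x) (B.mem_span y)
  rintro _ ⟨m, rfl⟩ _ ⟨k, rfl⟩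
  rcases (show 1 ≤ m from _root_.one_le).lt_or_eq with hm | rfl
  · rw [hbr2 m k hm]
    exact zero_mem _
  · rw [hbr1 k]
    exact basis_mem_derived (PNat.lt_add_left 1 k)

theorem apply_eq_zero_of_mem_derived (hbr2 : ∀ m k : ℕ+, 1 < m → br (B m) (B k) = 0)
    {z : L} (hz : z ∈ derived B) (y : L) : br z y = 0 := by
  rw [← mem_bot R]
  refine apply_mem_of_mem_span_of_mem_span ?_ hz (B.mem_span y)
  rintro _ ⟨m, hm, rfl⟩ _ ⟨k, rfl⟩
  exact (hbr2 m k hm).symm ▸ zero_mem _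

theorem map_basis_of_one_lt (hbr1 : ∀ n : ℕ+, br (B 1) (B n) = B (n + 1)) {h : L →ₗ[R] L}
    (hh : ∀ x y : L, h (br x y) = br (h x) (h y)) {n : ℕ+} (hn : 1 < n) :
    ∃ m : ℕ+, h (B n) = br (h (B 1)) (h (B m)) := by
  obtain ⟨m, rfl⟩ := PNat.exists_eq_succ_of_ne_one hn.ne'
  exact ⟨m, by rw [← hbr1 m, hh]⟩

theorem derived_le_comap (hbr1 : ∀ n : ℕ+, br (B 1) (B n) = B (n + 1))
    (hbr2 : ∀ m k : ℕ+, 1 < m → br (B m) (B k) = 0) {h : L →ₗ[R] L}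
    (hh : ∀ x y : L, h (br x y) = br (h x) (h y)) : derived B ≤ (derived B).comap h := by
  refine span_le.2 ?_
  rintro _ ⟨n, hn, rfl⟩
  obtain ⟨m, hm⟩ := map_basis_of_one_lt hbr1 hh hn
  rw [SetLike.mem_coe, mem_comap, hm]
  exact apply_mem_derived hbr1 hbr2 _ _

theorem derived_le_ker (hbr1 : ∀ n : ℕ+, br (B 1) (B n) = B (n + 1))
    (hbr2 : ∀ m k : ℕ+, 1 < m → br (B m) (B k) = 0) {f : L →ₗ[R] L}
    (hf : ∀ x y : L, f (br x y) = br (f x) (f y)) (hfS : ∀ x : L, f x ∈ derived B) :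
    derived B ≤ LinearMap.ker f := by
  refine span_le.2 ?_
  rintro _ ⟨n, hn, rfl⟩
  obtain ⟨m, hm⟩ := map_basis_of_one_lt hbr1 hf hn
  rw [SetLike.mem_coe, LinearMap.mem_ker, hm]
  exact apply_eq_zero_of_mem_derived hbr2 (hfS _) _

end CyclicLeibniz

open CyclicLeibniz

theorem stmt13_general
    (F : Type*) [Field F] (L : Type*) [AddCommGroup L] [Module F L]
    (br : L →ₗ[F] L →ₗ[F] L) (B : Module.Basis ℕ+ F L)
    (hbr1 : ∀ n : ℕ+, br (B 1) (B n) = B (n + 1))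
    (hbr2 : ∀ m k : ℕ+, 1 < m → br (B m) (B k) = 0) :
    (∀ f g : L →ₗ[F] L, (∀ x y : L, f (br x y) = br (f x) (f y)) →
      (∀ x y : L, g (br x y) = br (g x) (g y)) →
      (∀ x : L, f x ∈ Submodule.span F {z : L | ∃ n : ℕ+, 1 < n ∧ z = B n}) →
      (∀ x : L, g x ∈ Submodule.span F {z : L | ∃ n : ℕ+, 1 < n ∧ z = B n}) →
      f ∘ₗ g = 0) ∧
    (∀ f h : L →ₗ[F] L, (∀ x y : L, f (br x y) = br (f x) (f y)) →
      (∀ x y : L, h (br x y) = br (h x) (h y)) →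
      (∀ x : L, f x ∈ Submodule.span F {z : L | ∃ n : ℕ+, 1 < n ∧ z = B n}) →
      (∀ x : L, (h ∘ₗ f) x ∈ Submodule.span F {z : L | ∃ n : ℕ+, 1 < n ∧ z = B n}) ∧
      (∀ x : L, (f ∘ₗ h) x ∈ Submodule.span F {z : L | ∃ n : ℕ+, 1 < n ∧ z = B n})) := by
  refine ⟨fun f g hf _ hfS hgS => ?_, fun f h _ hh hfS => ?_⟩
  · ext x
    exact derived_le_ker hbr1 hbr2 hf hfS (hgS x)
  · exact ⟨fun x => derived_le_comap hbr1 hbr2 hh (hfS x), fun x => hfS (h x)⟩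

/-- For the infinite dimensional cyclic Leibniz algebra with basis `{a_n | n ≥ 1}`:
the set `S` of endomorphisms whose image lies in `[L,L] = span {a_n | n ≥ 2}` is a
two-sided ideal of the endomorphism monoid with zero multiplication: if `f, g ∈ S` then
`f ∘ g = 0`, and for any endomorphism `h` both `h ∘ f` and `f ∘ h` map `L` into `[L,L]`. -/
theorem stmt13
    (F : Type*) [Field F] (L : Type*) [AddCommGroup L] [Module F L]
    (br : L →ₗ[F] L →ₗ[F] L) (B : Module.Basis ℕ+ F L)
    (hleib : ∀ a b c : L, br a (br b c) = br (br a b) c + br b (br a c))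
    (hbr1 : ∀ n : ℕ+, br (B 1) (B n) = B (n + 1))
    (hbr2 : ∀ m k : ℕ+, 1 < m → br (B m) (B k) = 0) :
    (∀ f g : L →ₗ[F] L, (∀ x y : L, f (br x y) = br (f x) (f y)) →
      (∀ x y : L, g (br x y) = br (g x) (g y)) →
      (∀ x : L, f x ∈ Submodule.span F {z : L | ∃ n : ℕ+, 1 < n ∧ z = B n}) →
      (∀ x : L, g x ∈ Submodule.span F {z : L | ∃ n : ℕ+, 1 < n ∧ z = B n}) →
      f ∘ₗ g = 0) ∧
    (∀ f h : L →ₗ[F] L, (∀ x y : L, f (br x y) = br (f x) (f y)) →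
      (∀ x y : L, h (br x y) = br (h x) (h y)) →
      (∀ x : L, f x ∈ Submodule.span F {z : L | ∃ n : ℕ+, 1 < n ∧ z = B n}) →
      (∀ x : L, (h ∘ₗ f) x ∈ Submodule.span F {z : L | ∃ n : ℕ+, 1 < n ∧ z = B n}) ∧
      (∀ x : L, (f ∘ₗ h) x ∈ Submodule.span F {z : L | ∃ n : ℕ+, 1 < n ∧ z = B n})) :=
  stmt13_general F L br B hbr1 hbr2
end

section
/- Let L be the infinite-dimensional cyclic Leibniz algebra over a field F (basis {a_n | n ≥ 1}, [a_1,a_n] = a_{n+1}, [a_m,a_k] = 0 for m > 1). Every endomorphism f of L with f(a_1) ∉ [L,L] (i.e. the coefficient γ_1 of a_1 in f(a_1) is nonzero) is injective. -/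
/-!
Left multiplication by `x` is `γ(x) • ad a₁`, where `γ(x)` is the `a₁`-coordinate of `x`, and
`ad a₁` shifts the basis. Hence `f a_{n+1} = γ • [a₁, f a_n]` with `γ = γ(f a₁)`, so the matrix of `f`
in the basis `(a_n)` is lower triangular with diagonal `γ, γ², γ³, …`. A lower triangular map with
nonzero diagonal is injective: the lowest nonzero coordinate of `x` survives in `f x`.
-/

open Module

namespace Module.Basis

variable {ι R M : Type*} [LinearOrder ι] [Ring R] [NoZeroDivisors R]
  [AddCommGroup M] [Module R M]

theorem injective_of_repr_triangular (B : Basis ι R M) (f : M →ₗ[R] M)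
    (hlow : ∀ n k, k < n → B.repr (f (B n)) k = 0) (hdiag : ∀ n, B.repr (f (B n)) n ≠ 0) :
    Function.Injective f := by
  rw [← LinearMap.ker_eq_bot, LinearMap.ker_eq_bot']
  intro x hfx
  by_contra hx
  have hsupp : (B.repr x).support.Nonempty := by
    simpa [Finsupp.support_nonempty_iff] using hx
  set n₀ := (B.repr x).support.min' hsupp
  have hn₀ : B.repr x n₀ ≠ 0 := Finsupp.mem_support_iff.mp ((B.repr x).support.min'_mem hsupp)
  have hcoef : B.repr (f x) n₀ = B.repr x n₀ * B.repr (f (B n₀)) n₀ := by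
    conv_lhs => rw [← B.linearCombination_repr x, Finsupp.linearCombination_apply]
    rw [map_finsuppSum, map_finsuppSum, Finsupp.sum, Finsupp.finsetSum_apply,
      Finset.sum_eq_single n₀]
    · simp
    · intro n hn hne
      have : n₀ < n := lt_of_le_of_ne ((B.repr x).support.min'_le n hn) (Ne.symm hne)
      simp [hlow n n₀ this]
    · intro h
      exact absurd ((B.repr x).support.min'_mem hsupp) h
  rw [hfx, map_zero, Finsupp.zero_apply] at hcoef
  exact mul_ne_zero hn₀ (hdiag n₀) hcoef.symm

end Module.Basis

section CyclicLeibniz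

variable {R L : Type*} [CommRing R] [AddCommGroup L] [Module R L]
  {br : L →ₗ[R] L →ₗ[R] L} {B : Basis ℕ+ R L}

theorem repr_bracket_one_left_one (hbr1 : ∀ n : ℕ+, br (B 1) (B n) = B (n + 1)) (y : L) :
    B.repr (br (B 1) y) 1 = 0 := by
  have h : (B.coord 1).comp (br (B 1)) = 0 := B.ext fun m => by
    simp [hbr1, (PNat.lt_add_left 1 m).ne']
  simpa using LinearMap.congr_fun h y

theorem repr_bracket_one_left_succ (hbr1 : ∀ n : ℕ+, br (B 1) (B n) = B (n + 1)) (y : L)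
    (k : ℕ+) : B.repr (br (B 1) y) (k + 1) = B.repr y k := by
  have h : (B.coord (k + 1)).comp (br (B 1)) = B.coord k := B.ext fun m => by
    simp [hbr1, Finsupp.single_apply]
  simpa using LinearMap.congr_fun h y

theorem bracket_eq_repr_one_smul (hbr2 : ∀ m k : ℕ+, 1 < m → br (B m) (B k) = 0) (x : L) :
    br x = B.repr x 1 • br (B 1) := by
  have hzero : ∀ m : ℕ+, m ≠ 1 → br (B m) = 0 := fun m hm =>
    B.ext fun k => hbr2 m k (one_lt_iff_ne_one.mpr hm)
  conv_lhs => rw [← B.linearCombination_repr x]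
  rw [Finsupp.linearCombination_apply, map_finsuppSum, Finsupp.sum_eq_single (1 : ℕ+)]
  · rw [map_smul]
  · intro m _ hm
    rw [map_smul, hzero m hm, smul_zero]
  · intro _
    rw [zero_smul, map_zero]

theorem repr_endomorphism_basis (hbr1 : ∀ n : ℕ+, br (B 1) (B n) = B (n + 1))
    (hbr2 : ∀ m k : ℕ+, 1 < m → br (B m) (B k) = 0)
    {f : L →ₗ[R] L} (hf : ∀ x y : L, f (br x y) = br (f x) (f y)) (n : ℕ+) :
    (∀ k < n, B.repr (f (B n)) k = 0) ∧ B.repr (f (B n)) n = B.repr (f (B 1)) 1 ^ (n : ℕ) := by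
  induction n using PNat.recOn with
  | one => exact ⟨fun k hk => absurd hk (not_lt.mpr one_le), by simp⟩
  | succ n ih =>
    have hsucc : f (B (n + 1)) = B.repr (f (B 1)) 1 • br (B 1) (f (B n)) := by
      rw [← hbr1 n, hf, bracket_eq_repr_one_smul hbr2]
      rfl
    simp only [hsucc, map_smul, Finsupp.smul_apply, smul_eq_mul]
    refine ⟨fun k hk => ?_, ?_⟩
    · rcases eq_or_ne k 1 with rfl | hk1
      · rw [repr_bracket_one_left_one hbr1, mul_zero]
      · obtain ⟨j, rfl⟩ := PNat.exists_eq_succ_of_ne_one hk1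
        rw [repr_bracket_one_left_succ hbr1, ih.1 j (lt_of_add_lt_add_right hk), mul_zero]
    · rw [repr_bracket_one_left_succ hbr1, ih.2, PNat.add_coe, PNat.one_coe, pow_succ']

end CyclicLeibniz

theorem Module.Basis.mem_span_gt_one_of_repr_one_eq_zero {R M : Type*} [Semiring R]
    [AddCommMonoid M] [Module R M] (B : Basis ℕ+ R M) {x : M} (hx : B.repr x 1 = 0) :
    x ∈ Submodule.span R {x : M | ∃ n : ℕ+, 1 < n ∧ x = B n} := by
  have hset : {x : M | ∃ n : ℕ+, 1 < n ∧ x = B n} = B '' {n : ℕ+ | 1 < n} := by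
    ext
    simp [eq_comm]
  rw [hset, B.mem_span_image]
  intro n hn
  exact one_lt_iff_ne_one.mpr fun (h : n = 1) => Finsupp.mem_support_iff.mp hn (h ▸ hx)

theorem stmt14_general
    (F : Type*) [Field F] (L : Type*) [AddCommGroup L] [Module F L]
    (br : L →ₗ[F] L →ₗ[F] L) (B : Module.Basis ℕ+ F L)
    (hbr1 : ∀ n : ℕ+, br (B 1) (B n) = B (n + 1))
    (hbr2 : ∀ m k : ℕ+, 1 < m → br (B m) (B k) = 0)
    (f : L →ₗ[F] L) (hf : ∀ x y : L, f (br x y) = br (f x) (f y))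
    (h1 : f (B 1) ∉ Submodule.span F {x : L | ∃ n : ℕ+, 1 < n ∧ x = B n}) :
    Function.Injective f := by
  have hγ : B.repr (f (B 1)) 1 ≠ 0 := fun h => h1 (B.mem_span_gt_one_of_repr_one_eq_zero h)
  refine B.injective_of_repr_triangular f
    (fun n => (repr_endomorphism_basis hbr1 hbr2 hf n).1) (fun n => ?_)
  rw [(repr_endomorphism_basis hbr1 hbr2 hf n).2]
  exact pow_ne_zero _ hγ

/-- For the infinite dimensional cyclic Leibniz algebra with basis `{a_n | n ≥ 1}`:
every endomorphism `f` with `f(a₁) ∉ [L,L] = span {a_n | n ≥ 2}` is injective. -/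
theorem stmt14
    (F : Type*) [Field F] (L : Type*) [AddCommGroup L] [Module F L]
    (br : L →ₗ[F] L →ₗ[F] L) (B : Module.Basis ℕ+ F L)
    (hleib : ∀ a b c : L, br a (br b c) = br (br a b) c + br b (br a c))
    (hbr1 : ∀ n : ℕ+, br (B 1) (B n) = B (n + 1))
    (hbr2 : ∀ m k : ℕ+, 1 < m → br (B m) (B k) = 0)
    (f : L →ₗ[F] L) (hf : ∀ x y : L, f (br x y) = br (f x) (f y))
    (h1 : f (B 1) ∉ Submodule.span F {x : L | ∃ n : ℕ+, 1 < n ∧ x = B n}) :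
    Function.Injective f :=
  stmt14_general F L br B hbr1 hbr2 f hf h1
end

section
/- Let L be the infinite-dimensional cyclic Leibniz algebra over a field F (basis {a_n | n ≥ 1}, [a_1,a_n] = a_{n+1}, [a_m,a_k] = 0 for m > 1). If f is a derivation of L with f(a_1) = Σ_n γ_n a_n (finitely many γ_n nonzero), then for every s ≥ 1, f(a_s) = s·γ_1 a_s + Σ_{k≥2} γ_k a_{k+s-1}. -/
/-!
Since `[a_m, a_k] = 0` for `m > 1`, bracketing any `x` with `a_n` from the right only sees the
`a₁`-coordinate of `x`: `[x, a_n] = x₁ a_{n+1}`, while `[a₁, ·]` shifts every basis vector up by one.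
Applying the derivation rule to `a_{s+1} = [a₁, a_s]` therefore gives
`f(a_{s+1}) = γ₁ a_{s+1} + [a₁, f(a_s)]`, and induction on `s` moves every term of `f(a₁)` one step
up while the coefficient of the diagonal term grows by `γ₁`.
-/

theorem PNat.add_sub_one_add_one_s17 (k s : ℕ+) : k + s - 1 + 1 = k + (s + 1) - 1 := by
  rw [← add_assoc, PNat.add_sub, PNat.sub_add_of_lt (one_le.trans_lt (PNat.lt_add_left s k))]

theorem Module.Basis.repr_smul_add_sum_erase {ι R M : Type*} [Semiring R] [AddCommMonoid M]
    [Module R M] (B : Module.Basis ι R M) (x : M) (i : ι) :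
    B.repr x i • B i + ((B.repr x).erase i).sum (fun k c => c • B k) = x := by
  conv_rhs => rw [← B.linearCombination_repr x, Finsupp.linearCombination_apply,
    ← Finsupp.single_add_erase i (B.repr x)]
  rw [Finsupp.sum_add_index' (fun i => zero_smul R (B i)) (fun i _ _ => add_smul _ _ (B i)),
    Finsupp.sum_single_index (zero_smul R (B i))]

namespace CyclicLeibniz

variable {R L : Type*} [CommSemiring R] [AddCommMonoid L] [Module R L]
  {br : L →ₗ[R] L →ₗ[R] L} {B : Module.Basis ℕ+ R L}

variable (hbr1 : ∀ n : ℕ+, br (B 1) (B n) = B (n + 1))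
include hbr1

theorem apply_basis_right (hbr2 : ∀ m k : ℕ+, 1 < m → br (B m) (B k) = 0) (x : L) (n : ℕ+) :
    br x (B n) = B.repr x 1 • B (n + 1) := by
  suffices br.flip (B n) = (B.coord 1).smulRight (B (n + 1)) from LinearMap.congr_fun this x
  refine B.ext fun k => ?_
  rcases eq_or_ne k 1 with rfl | hk
  · simp [hbr1]
  · simp [hbr2 k n (one_le.lt_of_ne' hk), Finsupp.single_eq_of_ne hk.symm]

theorem derivation_apply_basis_succ (hbr2 : ∀ m k : ℕ+, 1 < m → br (B m) (B k) = 0)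
    {f : L →ₗ[R] L} (hf : ∀ x y : L, f (br x y) = br (f x) y + br x (f y)) (s : ℕ+) :
    f (B (s + 1)) = B.repr (f (B 1)) 1 • B (s + 1) + br (B 1) (f (B s)) := by
  simpa only [hbr1, apply_basis_right hbr1 hbr2] using hf (B 1) (B s)

theorem apply_basis_one_sum_shift (γ : ℕ+ →₀ R) (s : ℕ+) :
    br (B 1) (γ.sum fun k c => c • B (k + s - 1)) = γ.sum fun k c => c • B (k + (s + 1) - 1) := by
  simp only [map_finsuppSum, map_smul, hbr1, PNat.add_sub_one_add_one_s17]

end CyclicLeibniz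

theorem stmt17_general
    (F : Type*) [Field F] (L : Type*) [AddCommGroup L] [Module F L]
    (br : L →ₗ[F] L →ₗ[F] L) (B : Module.Basis ℕ+ F L)
    (hbr1 : ∀ n : ℕ+, br (B 1) (B n) = B (n + 1))
    (hbr2 : ∀ m k : ℕ+, 1 < m → br (B m) (B k) = 0)
    (f : L →ₗ[F] L) (hf : ∀ x y : L, f (br x y) = br (f x) y + br x (f y)) :
    ∀ s : ℕ+, f (B s) =
      (((s : ℕ) : F) * B.repr (f (B 1)) 1) • B s +
        ((B.repr (f (B 1))).erase 1).sum fun k c => c • B (k + s - 1) := by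
  intro s
  induction s using PNat.recOn with
  | one => simpa only [PNat.add_sub, PNat.one_coe, Nat.cast_one, one_mul]
      using (B.repr_smul_add_sum_erase (f (B 1)) 1).symm
  | succ s ih =>
    rw [CyclicLeibniz.derivation_apply_basis_succ hbr1 hbr2 hf, ih, map_add (br (B 1)), map_smul,
      hbr1, CyclicLeibniz.apply_basis_one_sum_shift hbr1, PNat.add_coe, Nat.cast_add, PNat.one_coe,
      Nat.cast_one]
    module

/-- For the infinite dimensional cyclic Leibniz algebra with basis `{a_n | n ≥ 1}`:
if `f` is a derivation with `f(a₁) = Σ_n γ_n a_n`, then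
`f(a_s) = s·γ₁ a_s + Σ_{k≥2} γ_k a_{k+s-1}` for all `s ≥ 1`. -/
theorem stmt17
    (F : Type*) [Field F] (L : Type*) [AddCommGroup L] [Module F L]
    (br : L →ₗ[F] L →ₗ[F] L) (B : Module.Basis ℕ+ F L)
    (hleib : ∀ a b c : L, br a (br b c) = br (br a b) c + br b (br a c))
    (hbr1 : ∀ n : ℕ+, br (B 1) (B n) = B (n + 1))
    (hbr2 : ∀ m k : ℕ+, 1 < m → br (B m) (B k) = 0)
    (f : L →ₗ[F] L) (hf : ∀ x y : L, f (br x y) = br (f x) y + br x (f y)) :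
    ∀ s : ℕ+, f (B s) =
      (((s : ℕ) : F) * B.repr (f (B 1)) 1) • B s +
        ((B.repr (f (B 1))).erase 1).sum fun k c => c • B (k + s - 1) :=
  stmt17_general F L br B hbr1 hbr2 f hf
end

section
/- Let L be the infinite-dimensional cyclic Leibniz algebra over a field F (basis {a_n | n ≥ 1}, [a_1,a_n] = a_{n+1}, [a_m,a_k] = 0 for m > 1). For any γ_1 ∈ F and any finitely supported sequence (γ_k)_{k≥2} in F, the linear map f defined by f(a_s) = s·γ_1 a_s + Σ_{k≥2} γ_k a_{k+s-1} is a derivation of L. -/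
/-!
Only `a₁` acts nontrivially from the left, so the bracket factors as
`[x, y] = c₁(x) · S y`, where `c₁` is the `a₁`-coordinate and `S = [a₁, -]` is the shift
`a_n ↦ a_{n+1}`. For such a bracket a linear map `f` is a derivation as soon as
`c₁ ∘ f = γ₁ c₁` and `f ∘ S = γ₁ S + S ∘ f`, and both identities are checked on the basis:
the terms `γ_k a_{k+s-1}` with `k ≥ 2` never hit `a₁` and commute with the shift, while
`s γ₁ a_s` contributes the extra `γ₁ S`.
-/

theorem LinearMap.map_smulRight_bracket {R M : Type*} [CommSemiring R] [AddCommMonoid M]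
    [Module R M] (φ : M →ₗ[R] R) (S f : M →ₗ[R] M) (γ : R) (hφ : φ ∘ₗ f = γ • φ)
    (hS : f ∘ₗ S = γ • S + S ∘ₗ f) (x y : M) :
    f (φ.smulRight S x y) = φ.smulRight S (f x) y + φ.smulRight S x (f y) := by
  have hφx : φ (f x) = γ * φ x := LinearMap.congr_fun hφ x
  have hSy : f (S y) = γ • S y + S (f y) := LinearMap.congr_fun hS y
  simp only [smulRight_apply, smul_apply, map_smul, hφx, hSy, smul_add, mul_smul]
  rw [smul_comm]

theorem Module.Basis.eq_smulRight_coord {ι R M N : Type*} [CommSemiring R] [AddCommMonoid M]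
    [Module R M] [AddCommMonoid N] [Module R N] (b : Module.Basis ι R M) (i : ι)
    (g : M →ₗ[R] N) (hg : ∀ j ≠ i, g (b j) = 0) : g = (b.coord i).smulRight (g (b i)) := by
  classical
  refine b.ext fun j => ?_
  rw [LinearMap.smulRight_apply, Basis.coord_apply, Basis.repr_self, Finsupp.single_apply]
  by_cases hj : j = i
  · rw [if_pos hj, hj, one_smul]
  · rw [if_neg hj, zero_smul, hg j hj]

theorem PNat.add_sub_one_coe (k s : ℕ+) : ((k + s - 1 : ℕ+) : ℕ) = k + s - 1 := by
  have hlt : 1 < k + s := by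
    rw [← PNat.coe_lt_coe, PNat.add_coe, PNat.one_coe]
    have := k.pos
    have := s.pos
    omega
  rw [PNat.sub_coe, if_pos hlt, PNat.add_coe, PNat.one_coe]

section

variable {R L : Type*} [CommSemiring R] [AddCommMonoid L] [Module R L] {B : Module.Basis ℕ+ R L}
  {γ₁ : R} {δ : ℕ+ →₀ R} {f : L →ₗ[R] L}

theorem coord_one_comp_eq_smul_coord_one (hδ : δ 1 = 0) (hfdef : ∀ s : ℕ+, f (B s) =
      (((s : ℕ) : R) * γ₁) • B s + δ.sum fun k c => c • B (k + s - 1)) :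
    B.coord 1 ∘ₗ f = γ₁ • B.coord 1 := by
  refine B.ext fun s => ?_
  have hshift : ∀ k ∈ δ.support, δ k • B.coord 1 (B (k + s - 1)) = 0 := by
    intro k hk
    have hk1 : k ≠ 1 := fun h => Finsupp.mem_support_iff.mp hk (h ▸ hδ)
    have hks : k + s - 1 ≠ 1 := by
      intro h
      have hval := congrArg PNat.val h
      rw [PNat.val_ofNat, PNat.add_sub_one_coe] at hval
      have := k.pos
      have := s.pos
      exact hk1 (PNat.coe_eq_one_iff.mp (by omega))
    simp [Ne.symm hks]
  simp only [LinearMap.comp_apply, hfdef, map_add, map_smul, map_finsuppSum]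
  rw [Finsupp.sum, Finset.sum_eq_zero hshift]
  by_cases hs : s = 1
  · subst hs; simp
  · simp [Ne.symm hs]

theorem comp_shift_eq_smul_shift_add_shift_comp {S : L →ₗ[R] L}
    (hS : ∀ n, S (B n) = B (n + 1)) (hfdef : ∀ s : ℕ+, f (B s) =
      (((s : ℕ) : R) * γ₁) • B s + δ.sum fun k c => c • B (k + s - 1)) :
    f ∘ₗ S = γ₁ • S + S ∘ₗ f := by
  refine B.ext fun n => ?_
  have hindex : ∀ k : ℕ+, k + (n + 1) - 1 = k + n - 1 + 1 := fun k => by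
    apply PNat.eq
    simp only [PNat.add_sub_one_coe, PNat.add_coe, PNat.one_coe]
    have := k.pos
    omega
  simp only [LinearMap.comp_apply, LinearMap.add_apply, LinearMap.smul_apply, hS, hfdef,
    map_add, map_smul, map_finsuppSum, hindex, PNat.add_coe, PNat.one_coe, Nat.cast_add,
    Nat.cast_one, add_mul, one_mul, add_smul]
  abel

end

theorem stmt18_general
    (F : Type*) [Field F] (L : Type*) [AddCommGroup L] [Module F L]
    (br : L →ₗ[F] L →ₗ[F] L) (B : Module.Basis ℕ+ F L)
    (hbr1 : ∀ n : ℕ+, br (B 1) (B n) = B (n + 1))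
    (hbr2 : ∀ m k : ℕ+, 1 < m → br (B m) (B k) = 0)
    (γ₁ : F) (δ : ℕ+ →₀ F) (hδ : δ 1 = 0) (f : L →ₗ[F] L)
    (hfdef : ∀ s : ℕ+, f (B s) =
      (((s : ℕ) : F) * γ₁) • B s + δ.sum fun k c => c • B (k + s - 1)) :
    ∀ x y : L, f (br x y) = br (f x) y + br x (f y) := by
  have hbr : br = (B.coord 1).smulRight (br (B 1)) :=
    B.eq_smulRight_coord 1 br fun m hm =>
      B.ext fun k => hbr2 m k (lt_of_le_of_ne one_le (Ne.symm hm))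
  rw [hbr]
  exact LinearMap.map_smulRight_bracket _ _ _ γ₁ (coord_one_comp_eq_smul_coord_one hδ hfdef)
    (comp_shift_eq_smul_shift_add_shift_comp hbr1 hfdef)

/-- For the infinite dimensional cyclic Leibniz algebra with basis `{a_n | n ≥ 1}`:
for any `γ₁ ∈ F` and any finitely supported sequence `(γ_k)_{k ≥ 2}` in `F`,
the linear map defined by `f(a_s) = s·γ₁ a_s + Σ_{k≥2} γ_k a_{k+s-1}`
is a derivation of `L`. -/
theorem stmt18
    (F : Type*) [Field F] (L : Type*) [AddCommGroup L] [Module F L]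
    (br : L →ₗ[F] L →ₗ[F] L) (B : Module.Basis ℕ+ F L)
    (hleib : ∀ a b c : L, br a (br b c) = br (br a b) c + br b (br a c))
    (hbr1 : ∀ n : ℕ+, br (B 1) (B n) = B (n + 1))
    (hbr2 : ∀ m k : ℕ+, 1 < m → br (B m) (B k) = 0)
    (γ₁ : F) (δ : ℕ+ →₀ F) (hδ : δ 1 = 0) (f : L →ₗ[F] L)
    (hfdef : ∀ s : ℕ+, f (B s) =
      (((s : ℕ) : F) * γ₁) • B s + δ.sum fun k c => c • B (k + s - 1)) :
    ∀ x y : L, f (br x y) = br (f x) y + br x (f y) :=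
  stmt18_general F L br B hbr1 hbr2 γ₁ δ hδ f hfdef
end

section
/- Let L be the infinite-dimensional cyclic Leibniz algebra over a field F (basis {a_n | n ≥ 1}, [a_1,a_n] = a_{n+1}, [a_m,a_k] = 0 for m > 1). The set A = {f ∈ Der(L) | f(x) ∈ [L,L] for all x ∈ L} is an abelian Lie ideal of the derivation algebra Der(L): it is closed under addition and Lie bracket, [f,g] = 0 for all f,g ∈ A, and [h,f] ∈ A for every derivation h and every f ∈ A. -/
/-!
A derivation `f` with values in `[L,L]` kills the left action of `f a₁`, so the Leibniz rule at
`a₁` says that `f` commutes with the shift `T = [a₁, -]`, `T aₙ = aₙ₊₁`. Since `a₁` is a cyclic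
vector of `T`, every endomorphism commuting with `T` is a polynomial in `T`; hence any two such
derivations commute. The ideal property holds because the commutator of derivations is a
derivation and every derivation preserves `[L,L]`, which is spanned by the values `T aₙ`.
-/

open Polynomial Submodule

namespace Module.End

variable {R V : Type*} [CommRing R] [AddCommGroup V] [Module R V]
  {B : Basis ℕ+ R V} {T : Module.End R V}

theorem pow_apply_basis_one_of_shift (hT : ∀ n, T (B n) = B (n + 1)) (k : ℕ) :
    (T ^ k) (B 1) = B k.succPNat := by
  induction k with
  | zero => rfl
  | succ k ih => rw [pow_succ', mul_apply, ih, hT]; rfl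

theorem exists_eq_aeval_of_commute_shift (hT : ∀ n, T (B n) = B (n + 1)) {f : Module.End R V}
    (hf : Commute f T) : ∃ p : R[X], f = aeval T p := by
  let ev : R[X] →ₗ[R] V := (LinearMap.applyₗ (B 1)).comp (aeval T).toLinearMap
  have hev : LinearMap.range ev = ⊤ := by
    rw [eq_top_iff, ← B.span_eq, span_le]
    rintro _ ⟨n, rfl⟩
    refine ⟨X ^ n.natPred, ?_⟩
    simp [ev, pow_apply_basis_one_of_shift hT]
  obtain ⟨p, hp⟩ := LinearMap.range_eq_top.1 hev (f (B 1))
  have hpT : ∀ k : ℕ, Commute (aeval T p) (T ^ k) := fun k => by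
    simpa using (Commute.all p (X ^ k)).map (aeval T)
  refine ⟨p, B.ext fun n => ?_⟩
  obtain ⟨k, rfl⟩ : ∃ k : ℕ, k.succPNat = n := ⟨n.natPred, PNat.succPNat_natPred n⟩
  calc f (B k.succPNat) = (T ^ k) (f (B 1)) := by
        rw [← pow_apply_basis_one_of_shift hT, ← mul_apply, (hf.pow_right k).eq, mul_apply]
    _ = (T ^ k) (aeval T p (B 1)) := by rw [← hp]; rfl
    _ = aeval T p (B k.succPNat) := by
        rw [← mul_apply, ← (hpT k).eq, mul_apply, pow_apply_basis_one_of_shift hT]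

theorem commute_of_commute_shift (hT : ∀ n, T (B n) = B (n + 1)) {f g : Module.End R V}
    (hf : Commute f T) (hg : Commute g T) : Commute f g := by
  obtain ⟨p, rfl⟩ := exists_eq_aeval_of_commute_shift hT hf
  obtain ⟨q, rfl⟩ := exists_eq_aeval_of_commute_shift hT hg
  exact (Commute.all p q).map (aeval T)

end Module.End

theorem Module.Basis.apply_mem_of_forall {ι R M N : Type*} [Semiring R] [AddCommMonoid M]
    [Module R M] [AddCommMonoid N] [Module R N] (b : Module.Basis ι R M) {p : Submodule R N}
    (φ : M →ₗ[R] N) (hφ : ∀ i, φ (b i) ∈ p) (x : M) : φ x ∈ p := by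
  have : (⊤ : Submodule R M) ≤ p.comap φ := by
    rw [← b.span_eq, span_le]
    rintro _ ⟨i, rfl⟩
    exact hφ i
  exact this trivial

section CyclicLeibniz

variable {R L : Type*} [CommRing R] [AddCommGroup L] [Module R L]

def IsDerivation (br : L →ₗ[R] L →ₗ[R] L) (f : L →ₗ[R] L) : Prop :=
  ∀ x y, f (br x y) = br (f x) y + br x (f y)

namespace IsDerivation

variable {br : L →ₗ[R] L →ₗ[R] L} {f g : L →ₗ[R] L}

theorem add (hf : IsDerivation br f) (hg : IsDerivation br g) : IsDerivation br (f + g) := by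
  intro x y
  simp only [LinearMap.add_apply, hf x y, hg x y, map_add]
  abel

theorem commutator (hf : IsDerivation br f) (hg : IsDerivation br g) :
    IsDerivation br (f ∘ₗ g - g ∘ₗ f) := by
  intro x y
  simp only [LinearMap.sub_apply, LinearMap.comp_apply, hf x y, hg x y, map_add, hf _ y,
    hg _ y, hf x _, hg x _, map_sub]
  abel

end IsDerivation

/-- For the cyclic Leibniz algebra this is `[L,L]`. -/
def tailSpan (B : Module.Basis ℕ+ R L) : Submodule R L :=
  span R {z | ∃ n : ℕ+, 1 < n ∧ z = B n}

/-- The set `A` of the theorem. -/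
def IsTailDerivation (br : L →ₗ[R] L →ₗ[R] L) (B : Module.Basis ℕ+ R L) (f : L →ₗ[R] L) :
    Prop :=
  IsDerivation br f ∧ ∀ x, f x ∈ tailSpan B

variable {br : L →ₗ[R] L →ₗ[R] L} {B : Module.Basis ℕ+ R L}

theorem basis_mem_tailSpan {n : ℕ+} (hn : 1 < n) : B n ∈ tailSpan B :=
  subset_span ⟨n, hn, rfl⟩

theorem br_eq_zero_of_mem_tailSpan (hbr2 : ∀ m k : ℕ+, 1 < m → br (B m) (B k) = 0) {z : L}
    (hz : z ∈ tailSpan B) : br z = 0 := by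
  induction hz using span_induction with
  | mem z hz =>
    obtain ⟨n, hn, rfl⟩ := hz
    exact B.ext fun k => hbr2 n k hn
  | zero => simp
  | add a b _ _ ha hb => simp [ha, hb]
  | smul c a _ ha => simp [ha]

theorem br_mem_tailSpan (hbr1 : ∀ n : ℕ+, br (B 1) (B n) = B (n + 1))
    (hbr2 : ∀ m k : ℕ+, 1 < m → br (B m) (B k) = 0) (x y : L) : br x y ∈ tailSpan B := by
  have hshift : br (B 1) y ∈ tailSpan B :=
    B.apply_mem_of_forall _ (fun n => hbr1 n ▸ basis_mem_tailSpan (by simp)) y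
  refine B.apply_mem_of_forall (br.flip y) (fun k => ?_) x
  rcases (_root_.one_le : 1 ≤ k).eq_or_lt with rfl | hk
  · exact hshift
  · simp [br_eq_zero_of_mem_tailSpan hbr2 (basis_mem_tailSpan hk)]

theorem IsDerivation.apply_mem_tailSpan (hbr1 : ∀ n : ℕ+, br (B 1) (B n) = B (n + 1))
    (hbr2 : ∀ m k : ℕ+, 1 < m → br (B m) (B k) = 0) {h : L →ₗ[R] L} (hh : IsDerivation br h)
    {z : L} (hz : z ∈ tailSpan B) : h z ∈ tailSpan B := by
  refine (span_le (p := (tailSpan B).comap h)).2 ?_ hz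
  rintro _ ⟨n, hn, rfl⟩
  obtain ⟨m, rfl⟩ := PNat.exists_eq_succ_of_ne_one hn.ne'
  show h (B (m + 1)) ∈ tailSpan B
  rw [← hbr1 m, hh]
  exact add_mem (br_mem_tailSpan hbr1 hbr2 _ _) (br_mem_tailSpan hbr1 hbr2 _ _)

namespace IsTailDerivation

variable {f g : L →ₗ[R] L}

theorem add (hf : IsTailDerivation br B f) (hg : IsTailDerivation br B g) :
    IsTailDerivation br B (f + g) :=
  ⟨hf.1.add hg.1, fun x => add_mem (hf.2 x) (hg.2 x)⟩

theorem commutator_of_isDerivation (hbr1 : ∀ n : ℕ+, br (B 1) (B n) = B (n + 1))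
    (hbr2 : ∀ m k : ℕ+, 1 < m → br (B m) (B k) = 0) {h : L →ₗ[R] L} (hh : IsDerivation br h)
    (hf : IsTailDerivation br B f) : IsTailDerivation br B (h ∘ₗ f - f ∘ₗ h) :=
  ⟨hh.commutator hf.1, fun x => sub_mem (hh.apply_mem_tailSpan hbr1 hbr2 (hf.2 x)) (hf.2 (h x))⟩

theorem commute_shift (hbr2 : ∀ m k : ℕ+, 1 < m → br (B m) (B k) = 0)
    (hf : IsTailDerivation br B f) : Commute f (br (B 1)) := by
  refine LinearMap.ext fun x => ?_
  simpa [br_eq_zero_of_mem_tailSpan hbr2 (hf.2 (B 1))] using hf.1 (B 1) x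

theorem commute (hbr1 : ∀ n : ℕ+, br (B 1) (B n) = B (n + 1))
    (hbr2 : ∀ m k : ℕ+, 1 < m → br (B m) (B k) = 0) (hf : IsTailDerivation br B f)
    (hg : IsTailDerivation br B g) : Commute f g :=
  Module.End.commute_of_commute_shift hbr1 (hf.commute_shift hbr2) (hg.commute_shift hbr2)

end IsTailDerivation

end CyclicLeibniz

theorem stmt19_general
    (F : Type*) [Field F] (L : Type*) [AddCommGroup L] [Module F L]
    (br : L →ₗ[F] L →ₗ[F] L) (B : Module.Basis ℕ+ F L)
    (hbr1 : ∀ n : ℕ+, br (B 1) (B n) = B (n + 1))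
    (hbr2 : ∀ m k : ℕ+, 1 < m → br (B m) (B k) = 0) :
    letI Der : (L →ₗ[F] L) → Prop := fun f => ∀ x y : L, f (br x y) = br (f x) y + br x (f y)
    letI A : (L →ₗ[F] L) → Prop := fun f => Der f ∧
      ∀ x : L, f x ∈ Submodule.span F {z : L | ∃ n : ℕ+, 1 < n ∧ z = B n}
    (∀ f g : L →ₗ[F] L, A f → A g → A (f + g)) ∧
    (∀ f g : L →ₗ[F] L, A f → A g → A (f ∘ₗ g - g ∘ₗ f)) ∧
    (∀ f g : L →ₗ[F] L, A f → A g → f ∘ₗ g - g ∘ₗ f = 0) ∧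
    (∀ h f : L →ₗ[F] L, Der h → A f → A (h ∘ₗ f - f ∘ₗ h)) :=
  ⟨fun _ _ => IsTailDerivation.add,
    fun _ _ hf hg => IsTailDerivation.commutator_of_isDerivation hbr1 hbr2 hf.1 hg,
    fun _ _ hf hg => sub_eq_zero.2 (IsTailDerivation.commute hbr1 hbr2 hf hg).eq,
    fun _ _ => IsTailDerivation.commutator_of_isDerivation hbr1 hbr2⟩

/-- For the infinite dimensional cyclic Leibniz algebra with basis `{a_n | n ≥ 1}`:
the set `A` of derivations mapping `L` into `[L,L] = span {a_n | n ≥ 2}` is an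
abelian Lie ideal of `Der(L)`: it is closed under addition and under the commutator
bracket, `[f,g] = 0` for `f, g ∈ A`, and `[h,f] ∈ A` for every derivation `h`
and every `f ∈ A`. -/
theorem stmt19
    (F : Type*) [Field F] (L : Type*) [AddCommGroup L] [Module F L]
    (br : L →ₗ[F] L →ₗ[F] L) (B : Module.Basis ℕ+ F L)
    (hleib : ∀ a b c : L, br a (br b c) = br (br a b) c + br b (br a c))
    (hbr1 : ∀ n : ℕ+, br (B 1) (B n) = B (n + 1))
    (hbr2 : ∀ m k : ℕ+, 1 < m → br (B m) (B k) = 0) :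
    letI Der : (L →ₗ[F] L) → Prop := fun f => ∀ x y : L, f (br x y) = br (f x) y + br x (f y)
    letI A : (L →ₗ[F] L) → Prop := fun f => Der f ∧
      ∀ x : L, f x ∈ Submodule.span F {z : L | ∃ n : ℕ+, 1 < n ∧ z = B n}
    (∀ f g : L →ₗ[F] L, A f → A g → A (f + g)) ∧
    (∀ f g : L →ₗ[F] L, A f → A g → A (f ∘ₗ g - g ∘ₗ f)) ∧
    (∀ f g : L →ₗ[F] L, A f → A g → f ∘ₗ g - g ∘ₗ f = 0) ∧
    (∀ h f : L →ₗ[F] L, Der h → A f → A (h ∘ₗ f - f ∘ₗ h)) :=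
  stmt19_general F L br B hbr1 hbr2
end
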